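/- arXiv:1205.1111 — 2 statements merged into one kernel-verified Lean document; each statement's English description precedes it below -/
import Mathlib

section
/- Let G be a group and let B0, B1, B2, C, d1, d2, φ be elements of G satisfying: (i) d1 * d2 = (B0 * B1 * B2 * C)^2; (ii) d1 commutes with B1; (iii) φ * d1 * φ⁻¹ = B1 and φ * B2 * φ⁻¹ = d2. Then B0' * C * B0 * B1 * B2 * C = [B2⁻¹ * d1, φ], where B0' = B2⁻¹ * B1⁻¹ * B0 * B1 * B2 and [x, y] = x * y * x⁻¹ * y⁻¹. -/
open scoped commutatorElement

theorem commutatorElement_inv_mul_eq {G : Type*} [Group G] (a b g : G) :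
    ⁅a⁻¹ * b, g⁆ = a⁻¹ * b * (g * b * g⁻¹)⁻¹ * (g * a * g⁻¹) := by
  rw [commutatorElement_def]
  group

theorem stmt_3 {G : Type*} [Group G] (B0 B1 B2 C d1 d2 φ : G)
    (hrel : d1 * d2 = (B0 * B1 * B2 * C) ^ 2)
    (hcomm : d1 * B1 = B1 * d1)
    (h1 : φ * d1 * φ⁻¹ = B1) (h2 : φ * B2 * φ⁻¹ = d2) :
    (B2⁻¹ * B1⁻¹ * B0 * B1 * B2) * C * B0 * B1 * B2 * C =
      (B2⁻¹ * d1) * φ * (B2⁻¹ * d1)⁻¹ * φ⁻¹ := by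
  have hcomm_inv : d1 * B1⁻¹ = B1⁻¹ * d1 := (Commute.inv_right hcomm).eq
  calc (B2⁻¹ * B1⁻¹ * B0 * B1 * B2) * C * B0 * B1 * B2 * C
      = B2⁻¹ * B1⁻¹ * (B0 * B1 * B2 * C) ^ 2 := by rw [sq]; group
    _ = B2⁻¹ * (B1⁻¹ * d1) * d2 := by rw [← hrel]; group
    _ = B2⁻¹ * d1 * (φ * d1 * φ⁻¹)⁻¹ * (φ * B2 * φ⁻¹) := by
      rw [← hcomm_inv, h1, h2]; group
    _ = ⁅B2⁻¹ * d1, φ⁆ := (commutatorElement_inv_mul_eq B2 d1 φ).symm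
    _ = (B2⁻¹ * d1) * φ * (B2⁻¹ * d1)⁻¹ * φ⁻¹ := commutatorElement_def _ _
end

section
/- Let G be a group and let a1, a2, a3, a4, a5, a6, b, s3, s4, s5, s6, d1, d2, d3, d4, d5, d6, d7, φ be elements of G satisfying: (i) d1 * d2 * d3 * d4 * d5 * d6 * d7 = a3 * a4 * a1 * b * s5 * a2 * (a5 * b * a5⁻¹) * s3 * s6 * a6 * (a3 * b * a3⁻¹) * s4; (ii) each of d1, ..., d7 is central in G; (iii) the elements a1, a2, a3, a4, a6, s5, s6 pairwise commute; (iv) φ * a3 * φ⁻¹ = d2, φ * d5 * φ⁻¹ = s5, φ * a2 * φ⁻¹ = d3, φ * d4 * φ⁻¹ = s6, φ * a1 * φ⁻¹ = d6, φ * d1 * φ⁻¹ = a4, and φ * a6 * φ⁻¹ = d7. Then b' * b5' * s3' * (a3 * b * a3⁻¹) * s4 = [a6⁻¹ * d1 * a1⁻¹ * d4 * a2⁻¹ * d5 * a3⁻¹, φ], where b' = (s5 * a2 * s6 * a6)⁻¹ * b * (s5 * a2 * s6 * a6), b5' = (s6 * a6)⁻¹ * (a5 * b * a5⁻¹) * (s6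 * a6), s3' = (s6 * a6)⁻¹ * s3 * (s6 * a6), and [x, y] = x * y * x⁻¹ * y⁻¹. -/
/-!
Write `x = a6⁻¹ d1 a1⁻¹ d4 a2⁻¹ d5 a3⁻¹`. Cancelling the conjugating factors, the left side is
`(a3 a4 a1 s5 a2 s6 a6)⁻¹` times the right side of relation (i), hence
`(a3 a4 a1 s5 a2 s6 a6)⁻¹ d1 ⋯ d7`. The commutator is `x · φ x⁻¹ φ⁻¹`, and (iv) turns
`φ x⁻¹ φ⁻¹` into `d2 s5⁻¹ d3 s6⁻¹ d6 a4⁻¹ d7`. Both words lie in the subgroup generated by the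
pairwise commuting `a_i`, `s_i` and the central `d_i`, which is abelian, and there they agree.
-/

open Subgroup

theorem Subgroup.exists_isMulCommutative_union_center_subset {G : Type*} [Group G] {S : Set G}
    (hS : ∀ x ∈ S, ∀ y ∈ S, Commute x y) :
    ∃ H : Subgroup G, IsMulCommutative H ∧ S ∪ center G ⊆ H := by
  refine ⟨closure (S ∪ center G), isMulCommutative_closure ?_, subset_closure⟩
  rintro x (hx | hx) y (hy | hy)
  · exact hS x hx y hy
  · exact mem_center_iff.mp hy x
  · exact (mem_center_iff.mp hx y).symm
  · exact mem_center_iff.mp hy x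

open scoped IsMulCommutative in
theorem inv_mul_prod_eq_of_commute_of_mem_center {G : Type*} [Group G]
    {a1 a2 a3 a4 a6 s5 s6 d1 d2 d3 d4 d5 d6 d7 : G}
    (hd1 : d1 ∈ center G) (hd2 : d2 ∈ center G) (hd3 : d3 ∈ center G) (hd4 : d4 ∈ center G)
    (hd5 : d5 ∈ center G) (hd6 : d6 ∈ center G) (hd7 : d7 ∈ center G)
    (hcomm : ∀ x ∈ ({a1, a2, a3, a4, a6, s5, s6} : Set G),
      ∀ y ∈ ({a1, a2, a3, a4, a6, s5, s6} : Set G), Commute x y) :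
    (a3 * a4 * a1 * s5 * a2 * s6 * a6)⁻¹ * (d1 * d2 * d3 * d4 * d5 * d6 * d7) =
      (a6⁻¹ * d1 * a1⁻¹ * d4 * a2⁻¹ * d5 * a3⁻¹) * (d2 * s5⁻¹ * d3 * s6⁻¹ * d6 * a4⁻¹ * d7) := by
  obtain ⟨H, _, hH⟩ := exists_isMulCommutative_union_center_subset hcomm
  lift a1 to H using hH (.inl (by simp))
  lift a2 to H using hH (.inl (by simp))
  lift a3 to H using hH (.inl (by simp))
  lift a4 to H using hH (.inl (by simp))
  lift a6 to H using hH (.inl (by simp))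
  lift s5 to H using hH (.inl (by simp))
  lift s6 to H using hH (.inl (by simp))
  lift d1 to H using hH (.inr hd1)
  lift d2 to H using hH (.inr hd2)
  lift d3 to H using hH (.inr hd3)
  lift d4 to H using hH (.inr hd4)
  lift d5 to H using hH (.inr hd5)
  lift d6 to H using hH (.inr hd6)
  lift d7 to H using hH (.inr hd7)
  norm_cast
  simp only [mul_inv]
  ac_rfl

theorem stmt_8 {G : Type*} [Group G]
    (a1 a2 a3 a4 a5 a6 b s3 s4 s5 s6 d1 d2 d3 d4 d5 d6 d7 φ : G)
    (hrel : d1 * d2 * d3 * d4 * d5 * d6 * d7 =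
      a3 * a4 * a1 * b * s5 * a2 * (a5 * b * a5⁻¹) * s3 * s6 * a6 *
        (a3 * b * a3⁻¹) * s4)
    (hd1 : d1 ∈ Subgroup.center G) (hd2 : d2 ∈ Subgroup.center G)
    (hd3 : d3 ∈ Subgroup.center G) (hd4 : d4 ∈ Subgroup.center G)
    (hd5 : d5 ∈ Subgroup.center G) (hd6 : d6 ∈ Subgroup.center G)
    (hd7 : d7 ∈ Subgroup.center G)
    (hcomm : ∀ x ∈ ({a1, a2, a3, a4, a6, s5, s6} : Set G),
      ∀ y ∈ ({a1, a2, a3, a4, a6, s5, s6} : Set G), Commute x y)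
    (h1 : φ * a3 * φ⁻¹ = d2) (h2 : φ * d5 * φ⁻¹ = s5)
    (h3 : φ * a2 * φ⁻¹ = d3) (h4 : φ * d4 * φ⁻¹ = s6)
    (h5 : φ * a1 * φ⁻¹ = d6) (h6 : φ * d1 * φ⁻¹ = a4)
    (h7 : φ * a6 * φ⁻¹ = d7) :
    ((s5 * a2 * s6 * a6)⁻¹ * b * (s5 * a2 * s6 * a6)) *
        ((s6 * a6)⁻¹ * (a5 * b * a5⁻¹) * (s6 * a6)) *
        ((s6 * a6)⁻¹ * s3 * (s6 * a6)) *
        (a3 * b * a3⁻¹) * s4 =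
      (a6⁻¹ * d1 * a1⁻¹ * d4 * a2⁻¹ * d5 * a3⁻¹) * φ *
        (a6⁻¹ * d1 * a1⁻¹ * d4 * a2⁻¹ * d5 * a3⁻¹)⁻¹ * φ⁻¹ := by
  set x := a6⁻¹ * d1 * a1⁻¹ * d4 * a2⁻¹ * d5 * a3⁻¹
  have hconj : φ * x⁻¹ * φ⁻¹ = d2 * s5⁻¹ * d3 * s6⁻¹ * d6 * a4⁻¹ * d7 := by
    rw [← MulAut.conj_apply]
    simp only [x, mul_inv_rev, inv_inv, map_mul, map_inv, MulAut.conj_apply,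
      h1, h2, h3, h4, h5, h6, h7, mul_assoc]
  calc _ = (a3 * a4 * a1 * s5 * a2 * s6 * a6)⁻¹ *
        (a3 * a4 * a1 * b * s5 * a2 * (a5 * b * a5⁻¹) * s3 * s6 * a6 * (a3 * b * a3⁻¹) * s4) := by
        group
    _ = (a3 * a4 * a1 * s5 * a2 * s6 * a6)⁻¹ * (d1 * d2 * d3 * d4 * d5 * d6 * d7) := by
        rw [hrel]
    _ = x * (φ * x⁻¹ * φ⁻¹) := by
        rw [hconj]
        exact inv_mul_prod_eq_of_commute_of_mem_center hd1 hd2 hd3 hd4 hd5 hd6 hd7 hcomm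
    _ = x * φ * x⁻¹ * φ⁻¹ := by group
end
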